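/- arXiv:2012.10483 — 3 statements merged into one kernel-verified Lean document; each statement's English description precedes it below -/
import Mathlib

section
/- Let a ≠ 0, b > 0, r₀ > 0, and let r : ℝ → ℝ be a function with r(0) = r₀ such that on an interval I containing 0 one has r(t) > 0 and r'(t) = a − b / r(t) for all t ∈ I. Then for all t ∈ I: ((a·r(t) − b)/b) · exp((a·r(t) − b)/b) = ((a·r₀ − b)/b) · exp((a·r₀ − b)/b) · exp(a²·t / b). -/
/-! With `u = (a r - b) / b`, the equation `r' = a - b / r` gives `u' = a u / r`, and
`1 + u = a r / b`; hence `(u eᵘ)' = (1 + u) eᵘ u' = (a² / b) u eᵘ`. A function with `f' = c f`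
on an interval through `0` equals `f 0 · e^{c t}` there, since `f e^{-c t}` has zero derivative. -/

open Real

theorem Set.OrdConnected.eq_of_hasDerivAt_eq_zero {E : Type*} [NormedAddCommGroup E]
    [NormedSpace ℝ E] {s : Set ℝ} {f : ℝ → E} (hs : s.OrdConnected)
    (hf : ∀ x ∈ s, HasDerivAt f 0 x) {x y : ℝ} (hx : x ∈ s) (hy : y ∈ s) : f y = f x := by
  have hdist : ‖f y - f x‖ ≤ 0 * ‖y - x‖ :=
    hs.convex.norm_image_sub_le_of_norm_hasDerivWithin_le
      (fun z hz => (hf z hz).hasDerivWithinAt) (fun _ _ => norm_zero.le) hx hy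
  rw [zero_mul, norm_le_zero_iff, sub_eq_zero] at hdist
  exact hdist

theorem Set.OrdConnected.eq_mul_exp_of_hasDerivAt {s : Set ℝ} {f : ℝ → ℝ} {c x₀ : ℝ}
    (hs : s.OrdConnected) (hx₀ : x₀ ∈ s) (hf : ∀ x ∈ s, HasDerivAt f (c * f x) x) :
    ∀ x ∈ s, f x = f x₀ * exp (c * (x - x₀)) := by
  have hdamped : ∀ x ∈ s, HasDerivAt (fun x => f x * exp (-(c * (x - x₀)))) 0 x := by
    intro x hx
    have hexp : HasDerivAt (fun x => exp (-(c * (x - x₀)))) (exp (-(c * (x - x₀))) * -c) x :=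
      (hasDerivAt_exp _).comp x ((((hasDerivAt_id x).sub_const x₀).const_mul c).neg.congr_deriv
        (by ring))
    exact ((hf x hx).mul hexp).congr_deriv (by ring)
  intro x hx
  have hconst := hs.eq_of_hasDerivAt_eq_zero hdamped hx₀ hx
  simp only [sub_self, mul_zero, neg_zero, exp_zero, mul_one] at hconst
  rw [← hconst, mul_assoc, ← exp_add, neg_add_cancel, exp_zero, mul_one]

theorem hasDerivAt_mul_exp (x : ℝ) : HasDerivAt (fun x => x * exp x) ((1 + x) * exp x) x :=
  ((hasDerivAt_id x).mul (hasDerivAt_exp x)).congr_deriv (by simp only [id]; ring)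

theorem hasDerivAt_mul_exp_of_hasDerivAt_eq_sub_div {a b t : ℝ} {r : ℝ → ℝ} (hb : b ≠ 0)
    (hr : r t ≠ 0) (hode : HasDerivAt r (a - b / r t) t) :
    HasDerivAt (fun s => (a * r s - b) / b * exp ((a * r s - b) / b))
      (a ^ 2 / b * ((a * r t - b) / b * exp ((a * r t - b) / b))) t := by
  have hu : HasDerivAt (fun s => (a * r s - b) / b) (a * (a - b / r t) / b) t :=
    ((hode.const_mul a).sub_const b).div_const b
  refine ((hasDerivAt_mul_exp _).comp t hu).congr_deriv ?_
  field_simp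
  ring

theorem sphere_advection_mean_curvature_implicit_exp_general
    (a b r₀ : ℝ) (hb : 0 < b)
    (r : ℝ → ℝ) (hr0 : r 0 = r₀) (I : Set ℝ) (hI : I.OrdConnected) (h0 : (0 : ℝ) ∈ I)
    (hpos : ∀ t ∈ I, 0 < r t)
    (hode : ∀ t ∈ I, HasDerivAt r (a - b / r t) t) :
    ∀ t ∈ I,
      ((a * r t - b) / b) * Real.exp ((a * r t - b) / b) =
        ((a * r₀ - b) / b) * Real.exp ((a * r₀ - b) / b) * Real.exp (a ^ 2 * t / b) := by
  intro t ht
  have hgrowth := hI.eq_mul_exp_of_hasDerivAt h0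
    (fun s hs => hasDerivAt_mul_exp_of_hasDerivAt_eq_sub_div hb.ne' (hpos s hs).ne' (hode s hs))
    t ht
  rw [hgrowth, hr0, sub_zero, div_mul_eq_mul_div (a ^ 2)]

/-- Implicit exponential form of the closed-form solution: if `r` solves
`r' = a - b/r`, `r 0 = r₀`, with `r t > 0` on an interval `I` containing `0`,
then `((a r(t) − b)/b) exp((a r(t) − b)/b)
  = ((a r₀ − b)/b) exp((a r₀ − b)/b) exp(a² t / b)` on `I`. -/
theorem sphere_advection_mean_curvature_implicit_exp
    (a b r₀ : ℝ) (ha : a ≠ 0) (hb : 0 < b) (hr₀ : 0 < r₀)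
    (r : ℝ → ℝ) (hr0 : r 0 = r₀) (I : Set ℝ) (hI : I.OrdConnected) (h0 : (0 : ℝ) ∈ I)
    (hpos : ∀ t ∈ I, 0 < r t)
    (hode : ∀ t ∈ I, HasDerivAt r (a - b / r t) t) :
    ∀ t ∈ I,
      ((a * r t - b) / b) * Real.exp ((a * r t - b) / b) =
        ((a * r₀ - b) / b) * Real.exp ((a * r₀ - b) / b) * Real.exp (a ^ 2 * t / b) :=
  sphere_advection_mean_curvature_implicit_exp_general a b r₀ hb r hr0 I hI h0 hpos hode
end

section
/- Let a > 0, b > 0, 0 < r₀ < b/a, and let r be a solution of r' = a − b/r with r(0) = r₀ and r(t) > 0 on [0, T). Then T ≤ r₀² / (b − a·r₀); i.e., a sphere starting below the meta-stable radius cannot remain positive for all time and must vanish in finite time. -/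
/-!
Below the meta-stable radius the vector field `a - b/r` is negative, so `r` can never climb
back to `r₀`: it stays `≤ r₀` for all time. Then `r' = a - b/r ≤ a - b/r₀ = -(b - a r₀)/r₀`,
so `r` lies below the line from `r₀` with that slope, which reaches zero at time
`r₀² / (b - a r₀)`.
-/

open Set

section Fencing

variable {f f' B B' : ℝ → ℝ} {t₀ T : ℝ}

theorem image_le_of_hasDerivAt_lt_boundary_Ico (hf : ∀ t ∈ Ico t₀ T, HasDerivAt f (f' t) t)
    (hB : ∀ t, HasDerivAt B (B' t) t) (h₀ : f t₀ ≤ B t₀)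
    (bound : ∀ t ∈ Ico t₀ T, f t = B t → f' t < B' t) : ∀ t ∈ Ico t₀ T, f t ≤ B t := by
  intro t ht
  have hsub : Icc t₀ t ⊆ Ico t₀ T := Icc_subset_Ico_right ht.2
  refine image_le_of_deriv_right_lt_deriv_boundary
    (fun x hx => (hf x (hsub hx)).continuousAt.continuousWithinAt)
    (fun x hx => (hf x (hsub (Ico_subset_Icc_self hx))).hasDerivWithinAt) h₀ hB
    (fun x hx => bound x (hsub (Ico_subset_Icc_self hx))) ⟨ht.1, le_rfl⟩

theorem image_le_of_hasDerivAt_le_Ico (hf : ∀ t ∈ Ico t₀ T, HasDerivAt f (f' t) t)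
    (hB : ∀ t, HasDerivAt B (B' t) t) (h₀ : f t₀ ≤ B t₀)
    (bound : ∀ t ∈ Ico t₀ T, f' t ≤ B' t) : ∀ t ∈ Ico t₀ T, f t ≤ B t := by
  intro t ht
  have hsub : Icc t₀ t ⊆ Ico t₀ T := Icc_subset_Ico_right ht.2
  refine image_le_of_deriv_right_le_deriv_boundary
    (fun x hx => (hf x (hsub hx)).continuousAt.continuousWithinAt)
    (fun x hx => (hf x (hsub (Ico_subset_Icc_self hx))).hasDerivWithinAt) h₀
    (fun x _ => (hB x).continuousAt.continuousWithinAt) (fun x _ => (hB x).hasDerivWithinAt)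
    (fun x hx => bound x (hsub (Ico_subset_Icc_self hx))) ⟨ht.1, le_rfl⟩

end Fencing

section SphereRadius

variable {a b r₀ T : ℝ} {r : ℝ → ℝ}

theorem radius_le_initial (hr0 : r 0 = r₀) (hr₀ : 0 < r₀) (hsubcrit : a * r₀ < b)
    (hode : ∀ t ∈ Ico 0 T, HasDerivAt r (a - b / r t) t) : ∀ t ∈ Ico 0 T, r t ≤ r₀ := by
  refine image_le_of_hasDerivAt_lt_boundary_Ico hode (fun t => hasDerivAt_const t r₀)
    hr0.le fun t _ hrt => ?_
  rw [hrt, sub_neg, lt_div_iff₀ hr₀]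
  exact hsubcrit

theorem radius_le_initial_sub_mul (hb : 0 < b) (hr0 : r 0 = r₀) (hr₀ : 0 < r₀)
    (hsubcrit : a * r₀ < b) (hpos : ∀ t ∈ Ico 0 T, 0 < r t)
    (hode : ∀ t ∈ Ico 0 T, HasDerivAt r (a - b / r t) t) :
    ∀ t ∈ Ico 0 T, r t ≤ r₀ - (b / r₀ - a) * t := by
  have hline (t : ℝ) : HasDerivAt (fun t => r₀ - (b / r₀ - a) * t) (-(b / r₀ - a)) t := by
    simpa using ((hasDerivAt_id t).const_mul (b / r₀ - a)).const_sub r₀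
  refine image_le_of_hasDerivAt_le_Ico hode hline (by simp [hr0]) fun t ht => ?_
  have : b / r₀ ≤ b / r t :=
    div_le_div_of_nonneg_left hb.le (hpos t ht) (radius_le_initial hr0 hr₀ hsubcrit hode t ht)
  linarith

end SphereRadius

/-- A sphere starting below the meta-stable radius vanishes in finite time:
if `r` solves `r' = a - b/r` with `r 0 = r₀`, `0 < r₀ < b/a`, and `r t > 0`
on `[0, T)`, then `T ≤ r₀² / (b − a r₀)`. -/
theorem sphere_advection_mean_curvature_finite_vanishing
    (a b r₀ T : ℝ) (ha : 0 < a) (hb : 0 < b)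
    (r : ℝ → ℝ) (hr0 : r 0 = r₀) (hr₀ : 0 < r₀) (hr₀' : r₀ < b / a)
    (hpos : ∀ t ∈ Set.Ico (0 : ℝ) T, 0 < r t)
    (hode : ∀ t ∈ Set.Ico (0 : ℝ) T, HasDerivAt r (a - b / r t) t) :
    T ≤ r₀ ^ 2 / (b - a * r₀) := by
  have hsubcrit : a * r₀ < b := by rw [lt_div_iff₀ ha] at hr₀'; linarith
  have hgap : 0 < b - a * r₀ := sub_pos.2 hsubcrit
  have hvanish : (b / r₀ - a) * (r₀ ^ 2 / (b - a * r₀)) = r₀ := by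
    rw [div_sub' hr₀.ne', div_mul_div_comm, div_eq_iff (mul_ne_zero hr₀.ne' hgap.ne')]
    ring
  by_contra! hTs
  have hs_mem : r₀ ^ 2 / (b - a * r₀) ∈ Ico 0 T := ⟨by positivity, hTs⟩
  have hline := radius_le_initial_sub_mul hb hr0 hr₀ hsubcrit hpos hode _ hs_mem
  linarith [hpos _ hs_mem]
end

section
/- Let a ≠ 0, b > 0, 0 < r₀ with b − a·r₀ > 0, and let r : [0, T) → ℝ be a solution of r' = a − b/r with r(0) = r₀, r(t) > 0 on [0, T), and r(t) → 0 as t → T from the left. Then the vanishing time is exactly T = (b/a²)·log(b / (b − a·r₀)) − r₀/a. -/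
/-!
Along the flow, `u = b - a r` solves the linear equation `u' = (a / r) u`, so it keeps the sign of
`u 0 = b - a r₀ > 0`. Where `u ≠ 0` the time needed to shrink from radius `ρ` to `0` is an explicit
function `τ ρ` with `τ 0 = 0`, and `τ (r t) + t` is conserved; letting `t → T` gives `T = τ r₀`.
-/

open Filter Topology Set

section LinearODE

variable {φ u : ℝ → ℝ} {x y : ℝ}

theorem eq_mul_exp_integral_of_hasDerivAt_mul (hxy : x ≤ y) (hφ : ContinuousOn φ (Icc x y))
    (hu : ∀ t ∈ Icc x y, HasDerivAt u (φ t * u t) t) :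
    u y = u x * Real.exp (∫ t in x..y, φ t) := by
  -- A globally continuous extension of `φ` has the primitive `A` everywhere.
  set ψ := IccExtend hxy fun t : Icc x y => φ t
  have hψφ : EqOn ψ φ (Icc x y) := fun t ht => IccExtend_of_mem hxy _ ht
  set A := fun s => ∫ t in x..s, ψ t
  have hA : ∀ s, HasDerivAt A (ψ s) s := fun s =>
    (continuous_IccExtend_iff.mpr hφ.domRestrict).integral_hasStrictDerivAt x s |>.hasDerivAt
  have hderiv : ∀ s ∈ Icc x y, HasDerivAt (fun s => u s * Real.exp (-A s)) 0 s := by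
    intro s hs
    refine ((hu s hs).mul (hA s).neg.exp).congr_deriv ?_
    rw [hψφ hs]
    ring
  have hconst := constant_of_has_deriv_right_zero
    (fun s hs => (hderiv s hs).continuousAt.continuousWithinAt)
    (fun s hs => (hderiv s (Ico_subset_Icc_self hs)).hasDerivWithinAt) y (right_mem_Icc.mpr hxy)
  have hAy : ∫ t in x..y, φ t = A y :=
    intervalIntegral.integral_congr (by rw [uIcc_of_le hxy]; exact hψφ.symm)
  simp only [A, intervalIntegral.integral_same, neg_zero, Real.exp_zero, mul_one,
    Real.exp_neg] at hconst
  rw [hAy, ← mul_inv_eq_iff_eq_mul₀ (Real.exp_ne_zero _), hconst]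

end LinearODE

-- Separating variables in `r' = a - b / r` gives `dt = r dr / (a r - b)`; this is its integral
-- from `ρ` down to `0`.
noncomputable def vanishingTime (a b ρ : ℝ) : ℝ :=
  b / a ^ 2 * Real.log (b / (b - a * ρ)) - ρ / a

theorem vanishingTime_zero (a b : ℝ) : vanishingTime a b 0 = 0 := by
  simp [vanishingTime]

theorem hasDerivAt_vanishingTime {a b ρ : ℝ} (ha : a ≠ 0) (hb : b ≠ 0) (hρ : b - a * ρ ≠ 0) :
    HasDerivAt (vanishingTime a b) (ρ / (b - a * ρ)) ρ := by
  have hq : HasDerivAt (fun ρ => b / (b - a * ρ)) (b * a / (b - a * ρ) ^ 2) ρ := by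
    refine (((hasDerivAt_id ρ).const_mul a |>.const_sub b).fun_inv hρ |>.const_mul b).congr_deriv ?_
    simp only [id]
    field_simp
  refine (((hq.log (div_ne_zero hb hρ)).const_mul (b / a ^ 2)).sub
    ((hasDerivAt_id ρ).div_const a)).congr_deriv ?_
  field_simp
  ring

section SphereFlow

variable {a b T : ℝ} {r : ℝ → ℝ}

theorem sub_mul_pos_of_hasDerivAt (hpos : ∀ t ∈ Ico 0 T, 0 < r t)
    (hode : ∀ t ∈ Ico 0 T, HasDerivAt r (a - b / r t) t) (h0 : 0 < b - a * r 0) :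
    ∀ t ∈ Ico 0 T, 0 < b - a * r t := by
  intro t ht
  have hsub : Icc 0 t ⊆ Ico 0 T := Icc_subset_Ico_right ht.2
  have hlin : ∀ s ∈ Icc 0 t, HasDerivAt (fun s => b - a * r s) (a / r s * (b - a * r s)) s := by
    intro s hs
    refine (((hode s (hsub hs)).const_mul a).const_sub b).congr_deriv ?_
    field_simp [(hpos s (hsub hs)).ne']
    ring
  have hcont : ContinuousOn (fun s => a / r s) (Icc 0 t) := fun s hs =>
    (continuousAt_const.div (hode s (hsub hs)).continuousAt (hpos s (hsub hs)).ne').continuousWithinAt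
  rw [eq_mul_exp_integral_of_hasDerivAt_mul ht.1 hcont hlin]
  positivity

theorem vanishingTime_add_eq (ha : a ≠ 0) (hb : b ≠ 0) (hpos : ∀ t ∈ Ico 0 T, 0 < r t)
    (hode : ∀ t ∈ Ico 0 T, HasDerivAt r (a - b / r t) t)
    (hu : ∀ t ∈ Ico 0 T, b - a * r t ≠ 0) :
    ∀ t ∈ Ico 0 T, vanishingTime a b (r t) + t = vanishingTime a b (r 0) := by
  have hderiv : ∀ s ∈ Ico 0 T, HasDerivAt (fun s => vanishingTime a b (r s) + s) 0 s := by
    intro s hs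
    refine (((hasDerivAt_vanishingTime ha hb (hu s hs)).comp s (hode s hs)).add
      (hasDerivAt_id s)).congr_deriv ?_
    rw [div_mul_eq_mul_div, div_add_one (hu s hs), div_eq_zero_iff, mul_sub,
      mul_div_cancel₀ _ (hpos s hs).ne']
    left
    ring
  intro t ht
  have hsub : Icc 0 t ⊆ Ico 0 T := Icc_subset_Ico_right ht.2
  simpa using constant_of_has_deriv_right_zero
    (fun s hs => (hderiv s (hsub hs)).continuousAt.continuousWithinAt)
    (fun s hs => (hderiv s (hsub (Ico_subset_Icc_self hs))).hasDerivWithinAt) t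
    (right_mem_Icc.mpr ht.1)

end SphereFlow

theorem sphere_advection_mean_curvature_vanishing_time_general
    (a b r₀ T : ℝ) (ha : a ≠ 0) (hb : 0 < b)
    (hcond : 0 < b - a * r₀) (hT : 0 < T)
    (r : ℝ → ℝ) (hr0 : r 0 = r₀)
    (hpos : ∀ t ∈ Set.Ico (0 : ℝ) T, 0 < r t)
    (hode : ∀ t ∈ Set.Ico (0 : ℝ) T, HasDerivAt r (a - b / r t) t)
    (hvanish : Tendsto r (𝓝[<] T) (𝓝 0)) :
    T = (b / a ^ 2) * Real.log (b / (b - a * r₀)) - r₀ / a := by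
  subst hr0
  have hu := sub_mul_pos_of_hasDerivAt hpos hode hcond
  have hflow := vanishingTime_add_eq ha hb.ne' hpos hode fun t ht => (hu t ht).ne'
  have hlim₀ : Tendsto (fun t => vanishingTime a b (r t)) (𝓝[<] T) (𝓝 0) := by
    have hcont := (hasDerivAt_vanishingTime (ρ := 0) ha hb.ne' (by simpa using hb.ne')).continuousAt
    rw [← vanishingTime_zero a b]
    exact hcont.tendsto.comp hvanish
  have hlim : Tendsto (fun t => vanishingTime a b (r t)) (𝓝[<] T)
      (𝓝 (vanishingTime a b (r 0) - T)) := by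
    refine (tendsto_const_nhds.sub (tendsto_id.mono_left nhdsWithin_le_nhds)).congr' ?_
    filter_upwards [Ioo_mem_nhdsLT hT] with t ht
    exact (eq_sub_of_add_eq (hflow t (Ioo_subset_Ico_self ht))).symm
  exact (sub_eq_zero.mp (tendsto_nhds_unique hlim hlim₀)).symm

/-- Vanishing time of advection and mean curvature flow: if `a ≠ 0`, `b > 0`,
`0 < r₀` with `b - a r₀ > 0`, and `r` solves `r' = a - b/r` on `[0, T)` with
`r 0 = r₀`, `r t > 0` on `[0, T)`, and `r t → 0` as `t → T⁻`, then
`T = (b/a²) log(b / (b − a r₀)) − r₀/a`. -/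
theorem sphere_advection_mean_curvature_vanishing_time
    (a b r₀ T : ℝ) (ha : a ≠ 0) (hb : 0 < b) (hr₀ : 0 < r₀)
    (hcond : 0 < b - a * r₀) (hT : 0 < T)
    (r : ℝ → ℝ) (hr0 : r 0 = r₀)
    (hpos : ∀ t ∈ Set.Ico (0 : ℝ) T, 0 < r t)
    (hode : ∀ t ∈ Set.Ico (0 : ℝ) T, HasDerivAt r (a - b / r t) t)
    (hvanish : Tendsto r (𝓝[<] T) (𝓝 0)) :
    T = (b / a ^ 2) * Real.log (b / (b - a * r₀)) - r₀ / a :=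
  sphere_advection_mean_curvature_vanishing_time_general a b r₀ T ha hb hcond hT r hr0 hpos hode
    hvanish
end
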